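/- arXiv:1906.06645 — 8 statements merged into one kernel-verified Lean document; each statement's English description precedes it below -/
import Mathlib

section
/- The SCA weight and transition probability satisfy the detailed-balance condition: w^SCA_{β,q}(σ) · P^SCA_{β,q}(σ,τ) = w^SCA_{β,q}(τ) · P^SCA_{β,q}(τ,σ) for all spin configurations σ, τ ∈ {±1}^V. -/
open Finset Real

variable {V : Type*}

/-- The real value (`±1`) of a spin `σ x ∈ ℤˣ = {±1}`. -/
def sp (σ : V → ℤˣ) (x : V) : ℝ := ((σ x : ℤ) : ℝ)

variable [Fintype V] [DecidableEq V]

/-- The Ising Hamiltonian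
`H(σ) = -(1/2)·Σ_{x,y} J_{x,y} σ_x σ_y - Σ_x h_x σ_x`. -/
noncomputable def Ham (J : V → V → ℝ) (h : V → ℝ) (σ : V → ℤˣ) : ℝ :=
  -(1 / 2) * ∑ x, ∑ y, J x y * sp σ x * sp σ y - ∑ x, h x * sp σ x

/-- The symmetrized Hamiltonian
`H̃(σ,τ) = -(1/2)·Σ_{x,y} J_{x,y} σ_x τ_y - (1/2)·Σ_x h_x (σ_x + τ_x)`. -/
noncomputable def Ham2 (J : V → V → ℝ) (h : V → ℝ) (σ τ : V → ℤˣ) : ℝ :=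
  -(1 / 2) * ∑ x, ∑ y, J x y * sp σ x * sp τ y - (1 / 2) * ∑ x, h x * (sp σ x + sp τ x)

/-- The cavity field `h̃_x(σ) = Σ_y J_{x,y} σ_y + h_x`. -/
noncomputable def cavity (J : V → V → ℝ) (h : V → ℝ) (σ : V → ℤˣ) (x : V) : ℝ :=
  ∑ y, J x y * sp σ y + h x

/-- The Boltzmann weight `w^G_β(σ) = e^{-β H(σ)}`. -/
noncomputable def wG (J : V → V → ℝ) (h : V → ℝ) (β : ℝ) (σ : V → ℤˣ) : ℝ :=
  Real.exp (-β * Ham J h σ)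

/-- The Gibbs distribution `π^G_β(σ) = w^G_β(σ) / Σ_τ w^G_β(τ)`. -/
noncomputable def piG (J : V → V → ℝ) (h : V → ℝ) (β : ℝ) (σ : V → ℤˣ) : ℝ :=
  wG J h β σ / ∑ τ : V → ℤˣ, wG J h β τ

/-- `spinFlip σ x` is the configuration `σ^x`, i.e. `σ` with the spin at `x` flipped. -/
def spinFlip (σ : V → ℤˣ) (x : V) : V → ℤˣ := Function.update σ x (-(σ x))

/-- The Glauber transition probability to the one-spin-flipped configuration:
`P^G_β(σ, σ^x) = (1/|V|) · w^G_β(σ^x) / (w^G_β(σ) + w^G_β(σ^x))`. -/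
noncomputable def PGflip (J : V → V → ℝ) (h : V → ℝ) (β : ℝ) (σ : V → ℤˣ) (x : V) : ℝ :=
  (1 / (Fintype.card V : ℝ)) * (wG J h β (spinFlip σ x) / (wG J h β σ + wG J h β (spinFlip σ x)))

/-- The full Glauber transition probability: `P^G_β(σ,σ^x)` to a one-spin-flipped
configuration, `1 - Σ_x P^G_β(σ,σ^x)` for staying, and `0` otherwise. -/
noncomputable def PG (J : V → V → ℝ) (h : V → ℝ) (β : ℝ) (σ τ : V → ℤˣ) : ℝ :=
  if τ = σ then 1 - ∑ x, PGflip J h β σ x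
  else ∑ x ∈ Finset.univ.filter (fun x => τ = spinFlip σ x), PGflip J h β σ x

/-- The SCA weight `w^SCA_{β,q}(σ) = Σ_τ exp(-β H̃(σ,τ) + q Σ_x σ_x τ_x)`. -/
noncomputable def wSCA (J : V → V → ℝ) (h : V → ℝ) (β q : ℝ) (σ : V → ℤˣ) : ℝ :=
  ∑ τ : V → ℤˣ, Real.exp (-β * Ham2 J h σ τ + q * ∑ x, sp σ x * sp τ x)

/-- The SCA transition probability
`P^SCA_{β,q}(σ,τ) = exp(-β H̃(σ,τ) + q Σ_x σ_x τ_x) / w^SCA_{β,q}(σ)`. -/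
noncomputable def PSCA (J : V → V → ℝ) (h : V → ℝ) (β q : ℝ) (σ τ : V → ℤˣ) : ℝ :=
  Real.exp (-β * Ham2 J h σ τ + q * ∑ x, sp σ x * sp τ x) / wSCA J h β q σ

/-- The SCA equilibrium distribution `π^SCA_{β,q}(σ) = w^SCA_{β,q}(σ) / Σ_τ w^SCA_{β,q}(τ)`. -/
noncomputable def piSCA (J : V → V → ℝ) (h : V → ℝ) (β q : ℝ) (σ : V → ℤˣ) : ℝ :=
  wSCA J h β q σ / ∑ τ : V → ℤˣ, wSCA J h β q τ

/-- The disagreement set `D_{σ,τ} = {x ∈ V : σ_x ≠ τ_x}`. -/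
def Dset (σ τ : V → ℤˣ) : Finset V := Finset.univ.filter (fun x => σ x ≠ τ x)

/-- The expected number of spin-flips per update of the Glauber dynamics,
`E^G_β[|D_{σ,X_σ}|] = Σ_τ |D_{σ,τ}| P^G_β(σ,τ)`. -/
noncomputable def EG (J : V → V → ℝ) (h : V → ℝ) (β : ℝ) (σ : V → ℤˣ) : ℝ :=
  ∑ τ : V → ℤˣ, ((Dset σ τ).card : ℝ) * PG J h β σ τ

/-- The expected number of spin-flips per update of the SCA dynamics,
`E^SCA_{β,q}[|D_{σ,X_σ}|] = Σ_τ |D_{σ,τ}| P^SCA_{β,q}(σ,τ)`. -/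
noncomputable def ESCA (J : V → V → ℝ) (h : V → ℝ) (β q : ℝ) (σ : V → ℤˣ) : ℝ :=
  ∑ τ : V → ℤˣ, ((Dset σ τ).card : ℝ) * PSCA J h β q σ τ

/-- `v = Σ_{{x,y} : x≠y} J_{x,y}² + Σ_x h_x²`, the sum over unordered pairs of distinct
vertices written as `(1/2)·Σ_{x≠y} J_{x,y}²`. -/
noncomputable def vtot (J : V → V → ℝ) (h : V → ℝ) : ℝ :=
  (1 / 2) * ∑ x, ∑ y ∈ Finset.univ.filter (fun y => y ≠ x), (J x y) ^ 2 + ∑ x, (h x) ^ 2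


lemma ham2_symm (J : V → V → ℝ) (h : V → ℝ) (hJ : ∀ x y, J x y = J y x) (σ τ : V → ℤˣ) :
    Ham2 J h σ τ = Ham2 J h τ σ := by
  unfold Ham2
  rw [Finset.sum_comm]
  congr 1
  · congr 1
    apply Finset.sum_congr rfl; intro y _
    apply Finset.sum_congr rfl; intro x _
    rw [hJ x y]; ring
  · congr 1
    apply Finset.sum_congr rfl; intro x _
    ring

lemma wSCA_pos (J : V → V → ℝ) (h : V → ℝ) (β q : ℝ) (σ : V → ℤˣ) :
    0 < wSCA J h β q σ := by
  unfold wSCA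
  exact Finset.sum_pos (fun τ _ => Real.exp_pos _) ⟨σ, Finset.mem_univ σ⟩

/-- the SCA weight and transition probability satisfy detailed balance:
`w^SCA_{β,q}(σ) P^SCA_{β,q}(σ,τ) = w^SCA_{β,q}(τ) P^SCA_{β,q}(τ,σ)`. -/
theorem sca_detailed_balance
    (J : V → V → ℝ) (h : V → ℝ) (β q : ℝ) (hβ : 0 ≤ β) (hq : 0 ≤ q)
    (hJ : ∀ x y, J x y = J y x) (hJ0 : ∀ x, J x x = 0) :
    ∀ σ τ : V → ℤˣ,
      wSCA J h β q σ * PSCA J h β q σ τ = wSCA J h β q τ * PSCA J h β q τ σ := by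
  intro σ τ
  unfold PSCA
  rw [mul_div_cancel₀ _ (wSCA_pos J h β q σ).ne', mul_div_cancel₀ _ (wSCA_pos J h β q τ).ne']
  rw [ham2_symm J h hJ σ τ]
  congr 3
  apply Finset.sum_congr rfl; intro x _; ring
end

section
/- For every spin configuration σ, the expected number of spin-flips in one update of the SCA dynamics equals E^SCA_{β,q}[|D_{σ,X_σ}|] = Σ_{x∈V} (e^{β·h̃_x(σ)·σ_x + 2q} + 1)^{−1}. -/
open Finset Real

variable {V : Type*}

variable [Fintype V] [DecidableEq V]

/-!
Once `J` is symmetric, the exponent `-β H̃(σ,τ) + q Σ_x σ_x τ_x` is, for fixed `σ`, a sum of terms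
each depending on a single `τ_x`, so `P^SCA(σ, ·)` is a product measure. The expected size of
`D_{σ,τ}` is then the sum over `x` of the probability that `τ_x = -σ_x`, which is
`e^{-t}/(e^{t} + e^{-t}) = (e^{2t} + 1)⁻¹` with `2t = β h̃_x(σ) σ_x + 2q`.
-/

section ProductWeights

variable {ι S : Type*} [Fintype ι] [DecidableEq ι] [Fintype S]

theorem sum_mul_prod_eq_mul_prod_erase (f : ι → S → ℝ) (g : S → ℝ) (x : ι) :
    ∑ τ : ι → S, g (τ x) * ∏ y, f y (τ y)
      = (∑ s, g s * f x s) * ∏ y ∈ univ.erase x, ∑ s, f y s := by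
  set f' := Function.update f x fun s => g s * f x s
  have hf' : ∀ τ : ι → S, g (τ x) * ∏ y, f y (τ y) = ∏ y, f' y (τ y) := fun τ => by
    rw [← mul_prod_erase univ _ (mem_univ x), ← mul_prod_erase univ _ (mem_univ x),
      ← mul_assoc]
    congr 1
    · simp [f']
    · exact prod_congr rfl fun y hy => by simp [f', ne_of_mem_erase hy]
  rw [Fintype.sum_congr _ _ hf', ← Fintype.prod_sum, ← mul_prod_erase univ _ (mem_univ x)]
  congr 1
  · simp [f']
  · exact prod_congr rfl fun y hy => by simp [f', ne_of_mem_erase hy]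

theorem sum_card_filter_mul_prod_div (f : ι → S → ℝ) (p : ι → S → Prop)
    [∀ x, DecidablePred (p x)] (hf : ∀ x, ∑ s, f x s ≠ 0) :
    ∑ τ : ι → S, (#{x | p x (τ x)} : ℝ) * ((∏ y, f y (τ y)) / ∑ τ' : ι → S, ∏ y, f y (τ' y))
      = ∑ x, (∑ s with p x s, f x s) / ∑ s, f x s := by
  simp_rw [natCast_card_filter, sum_mul, ← Fintype.prod_sum]
  rw [sum_comm]
  refine sum_congr rfl fun x _ => ?_
  have hrest : ∏ y ∈ univ.erase x, ∑ s, f y s ≠ 0 := prod_ne_zero_iff.2 fun y _ => hf y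
  simp_rw [← mul_div_assoc, ← sum_div]
  rw [sum_mul_prod_eq_mul_prod_erase (g := fun s => if p x s then 1 else 0),
    ← mul_prod_erase univ (fun y => ∑ s, f y s) (mem_univ x), mul_div_mul_right _ _ hrest]
  simp only [sum_filter, ite_mul, one_mul, zero_mul]

end ProductWeights

theorem exp_sub_div_exp_add_add_exp_sub (c t : ℝ) :
    exp (c - t) / (exp (c + t) + exp (c - t)) = (exp (2 * t) + 1)⁻¹ := by
  rw [← inv_div, add_div, div_self (exp_pos _).ne', ← exp_sub]
  ring_nf

theorem Int.units_sum_exp_filter_ne_div_sum_exp (c a : ℝ) (u : ℤˣ) :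
    (∑ s : ℤˣ with u ≠ s, exp (c + a * (s : ℤ))) / ∑ s : ℤˣ, exp (c + a * (s : ℤ))
      = (exp (2 * (a * u)) + 1)⁻¹ := by
  have hsum : ∀ φ : ℤˣ → ℝ, ∑ s, φ s = φ u + φ (-u) := fun φ => by
    rcases Int.units_eq_one_or u with rfl | rfl <;> simp [add_comm]
  have hflip : ({s | u ≠ s} : Finset ℤˣ) = {-u} := by
    ext s
    rw [mem_filter_univ, mem_singleton, ne_comm]
    exact Int.units_ne_iff_eq_neg
  rw [hflip, sum_singleton, hsum, ← exp_sub_div_exp_add_add_exp_sub c (a * u)]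
  push_cast
  ring_nf

theorem neg_mul_Ham2_add_eq_sum {ι : Type*} [Fintype ι] (J : ι → ι → ℝ) (h : ι → ℝ) (β q : ℝ)
    (hJ : ∀ x y, J x y = J y x) (σ τ : ι → ℤˣ) :
    -β * Ham2 J h σ τ + q * ∑ x, sp σ x * sp τ x
      = ∑ x, (β / 2 * h x * sp σ x + (β / 2 * cavity J h σ x + q * sp σ x) * sp τ x) := by
  have hswap : ∑ x, ∑ y, J x y * sp σ x * sp τ y = ∑ x, (∑ y, J x y * sp σ y) * sp τ x := by
    rw [sum_comm]
    simp only [sum_mul]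
    exact sum_congr rfl fun x _ => sum_congr rfl fun y _ => by rw [hJ]
  calc -β * Ham2 J h σ τ + q * ∑ x, sp σ x * sp τ x
      = β / 2 * ∑ x, (∑ y, J x y * sp σ y) * sp τ x + β / 2 * ∑ x, h x * (sp σ x + sp τ x)
          + q * ∑ x, sp σ x * sp τ x := by
        rw [Ham2, hswap]; ring
    _ = _ := by
        simp only [mul_sum, ← sum_add_distrib]
        exact sum_congr rfl fun x _ => by rw [cavity]; ring

theorem sca_expected_flips_general
    (J : V → V → ℝ) (h : V → ℝ) (β q : ℝ)
    (hJ : ∀ x y, J x y = J y x) :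
    ∀ σ : V → ℤˣ,
      ESCA J h β q σ =
        ∑ x, (Real.exp (β * cavity J h σ x * sp σ x + 2 * q) + 1)⁻¹ := by
  intro σ
  set a : V → ℝ := fun x => β / 2 * cavity J h σ x + q * sp σ x
  set f : V → ℤˣ → ℝ := fun x s => exp (β / 2 * h x * sp σ x + a x * (s : ℤ))
  have hweight : ∀ τ, exp (-β * Ham2 J h σ τ + q * ∑ x, sp σ x * sp τ x) = ∏ x, f x (τ x) :=
    fun τ => by rw [neg_mul_Ham2_add_eq_sum J h β q hJ, exp_sum]; rfl
  have hESCA : ESCA J h β q σ = ∑ τ : V → ℤˣ, (#{x | σ x ≠ τ x} : ℝ)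
      * ((∏ y, f y (τ y)) / ∑ τ' : V → ℤˣ, ∏ y, f y (τ' y)) := by
    simp only [ESCA, PSCA, wSCA, hweight, Dset]
  rw [hESCA, sum_card_filter_mul_prod_div f (fun x s => σ x ≠ s)
    fun x => (sum_pos (fun _ _ => exp_pos _) univ_nonempty).ne']
  refine sum_congr rfl fun x _ => ?_
  rw [Int.units_sum_exp_filter_ne_div_sum_exp]
  have hsq : sp σ x * sp σ x = 1 := by
    rw [sp, ← Int.cast_mul, ← Units.val_mul, Int.units_mul_self, Units.val_one, Int.cast_one]
  have hexponent : 2 * (a x * sp σ x) = β * cavity J h σ x * sp σ x + 2 * q := by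
    linear_combination (2 * q) * hsq
  exact congrArg (fun t => (exp t + 1)⁻¹) hexponent

/-- the expected number of spin-flips per update of the SCA dynamics is
`E^SCA_{β,q}[|D_{σ,X_σ}|] = Σ_x (e^{β h̃_x(σ) σ_x + 2q} + 1)⁻¹`. -/
theorem sca_expected_flips
    (J : V → V → ℝ) (h : V → ℝ) (β q : ℝ) (hβ : 0 ≤ β) (hq : 0 ≤ q)
    (hJ : ∀ x y, J x y = J y x) (hJ0 : ∀ x, J x x = 0) :
    ∀ σ : V → ℤˣ,
      ESCA J h β q σ =
        ∑ x, (Real.exp (β * cavity J h σ x * sp σ x + 2 * q) + 1)⁻¹ :=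
  sca_expected_flips_general J h β q hJ
end

section
/- (Exact decomposition of Remark 3.2(ii)) For all spin configurations σ, τ ∈ {±1}^V, P^SCA_{β,q}(σ,τ) = Π_{x∈D_{σ,τ}} (ε_x(σ)·p_x(σ)) · Π_{y∈V∖D_{σ,τ}} (1 − ε_y(σ)·p_y(σ)), where ε_x(σ) = e^{−q}·cosh((β/2)·h̃_x(σ)) / cosh((β/2)·h̃_x(σ) + q·σ_x) and p_x(σ) = e^{−(β/2)·h̃_x(σ)·σ_x} / (2·cosh((β/2)·h̃_x(σ))). -/
open Finset Real

variable {V : Type*}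

variable [Fintype V] [DecidableEq V]

-- aux
lemma sp_cases (σ : V → ℤˣ) (x : V) : sp σ x = 1 ∨ sp σ x = -1 := by
  rcases Int.units_eq_one_or (σ x) with h1 | h1 <;> simp [sp, h1]

lemma sp_of_ne {σ τ : V → ℤˣ} {x : V} (h : σ x ≠ τ x) : sp τ x = -sp σ x := by
  rcases Int.units_eq_one_or (σ x) with h1 | h1 <;>
  rcases Int.units_eq_one_or (τ x) with h2 | h2 <;> simp_all [sp]

lemma exp_decomp (J : V → V → ℝ) (h : V → ℝ) (β q : ℝ)
    (hJ : ∀ x y, J x y = J y x) (σ τ : V → ℤˣ) :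
    -β * Ham2 J h σ τ + q * ∑ x, sp σ x * sp τ x
      = (β / 2 * ∑ x, h x * sp σ x)
        + ∑ x, (β / 2 * cavity J h σ x + q * sp σ x) * sp τ x := by
  have key : ∑ x, ∑ y, J x y * sp σ x * sp τ y
      = ∑ x, (∑ y, J x y * sp σ y) * sp τ x := by
    rw [Finset.sum_comm]
    refine Finset.sum_congr rfl fun x _ => ?_
    rw [Finset.sum_mul]
    refine Finset.sum_congr rfl fun y _ => ?_
    rw [hJ y x]
  have h2 : ∑ x, h x * (sp σ x + sp τ x)
      = ∑ x, h x * sp σ x + ∑ x, h x * sp τ x := by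
    rw [← Finset.sum_add_distrib]
    exact Finset.sum_congr rfl fun x _ => by ring
  have h3 : ∑ x, (β / 2 * cavity J h σ x + q * sp σ x) * sp τ x
      = β / 2 * ∑ x, (∑ y, J x y * sp σ y) * sp τ x
        + β / 2 * ∑ x, h x * sp τ x + q * ∑ x, sp σ x * sp τ x := by
    simp only [cavity, Finset.mul_sum]
    rw [← Finset.sum_add_distrib, ← Finset.sum_add_distrib]
    exact Finset.sum_congr rfl fun x _ => by ring
  rw [h3, ← key]
  simp only [Ham2, h2]
  ring

lemma wSCA_eq (J : V → V → ℝ) (h : V → ℝ) (β q : ℝ)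
    (hJ : ∀ x y, J x y = J y x) (σ : V → ℤˣ) :
    wSCA J h β q σ = Real.exp (β / 2 * ∑ x, h x * sp σ x)
      * ∏ x, (2 * Real.cosh (β / 2 * cavity J h σ x + q * sp σ x)) := by
  have : ∀ τ : V → ℤˣ,
      Real.exp (-β * Ham2 J h σ τ + q * ∑ x, sp σ x * sp τ x)
        = Real.exp (β / 2 * ∑ x, h x * sp σ x)
          * ∏ x, Real.exp ((β / 2 * cavity J h σ x + q * sp σ x) * sp τ x) := by
    intro τ
    rw [exp_decomp J h β q hJ σ τ, Real.exp_add, Real.exp_sum]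
  rw [wSCA]
  simp only [this]
  rw [← Finset.mul_sum]
  congr 1
  have huniv : (Finset.univ : Finset ℤˣ) = {1, -1} := by decide
  have : ∀ x : V, (2 : ℝ) * Real.cosh (β / 2 * cavity J h σ x + q * sp σ x)
      = ∑ s : ℤˣ, Real.exp ((β / 2 * cavity J h σ x + q * sp σ x) * ((s : ℤ) : ℝ)) := by
    intro x
    rw [huniv, Finset.sum_insert (by decide), Finset.sum_singleton]
    simp [Real.cosh_eq]
    ring
  rw [Finset.prod_congr rfl fun x _ => this x, Finset.prod_univ_sum,
    Fintype.piFinset_univ]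
  rfl

lemma per_site_flip (a q s : ℝ) (hs : s = 1 ∨ s = -1) :
    (Real.exp (-q) * Real.cosh a / Real.cosh (a + q * s))
      * (Real.exp (-a * s) / (2 * Real.cosh a))
    = Real.exp ((a + q * s) * (-s)) / (2 * Real.cosh (a + q * s)) := by
  have hc : Real.cosh a ≠ 0 := (Real.cosh_pos _).ne'
  have hc2 : Real.cosh (a + q * s) ≠ 0 := (Real.cosh_pos _).ne'
  have hs2 : s * s = 1 := by rcases hs with h | h <;> rw [h] <;> norm_num
  have he : Real.exp (-q) * Real.exp (-a * s) = Real.exp ((a + q * s) * (-s)) := by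
    rw [← Real.exp_add]
    congr 1
    linear_combination q * hs2
  have hnum : Real.exp (-q) * Real.cosh a * Real.exp (-a * s)
      = Real.cosh a * Real.exp ((a + q * s) * (-s)) := by rw [← he]; ring
  rw [div_mul_div_comm, hnum,
    show Real.cosh (a + q * s) * (2 * Real.cosh a)
      = Real.cosh a * (2 * Real.cosh (a + q * s)) by ring,
    mul_div_mul_left _ _ hc]

lemma per_site_stay (a q s : ℝ) (hs : s = 1 ∨ s = -1) :
    1 - (Real.exp (-q) * Real.cosh a / Real.cosh (a + q * s))
      * (Real.exp (-a * s) / (2 * Real.cosh a))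
    = Real.exp ((a + q * s) * s) / (2 * Real.cosh (a + q * s)) := by
  rw [per_site_flip a q s hs]
  have hc2 : Real.cosh (a + q * s) ≠ 0 := (Real.cosh_pos _).ne'
  have hg : (0:ℝ) < 2 * Real.cosh (a + q * s) := by positivity
  rw [eq_div_iff hg.ne', sub_mul, div_mul_cancel₀ _ hg.ne', Real.cosh_eq]
  rcases hs with h | h <;> subst h <;> ring_nf

/-- exact decomposition of Remark 3.2(ii):
`P^SCA_{β,q}(σ,τ) = Π_{x∈D_{σ,τ}} (ε_x(σ) p_x(σ)) · Π_{y∉D_{σ,τ}} (1 - ε_y(σ) p_y(σ))`,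
where `ε_x(σ) = e^{-q} cosh((β/2) h̃_x(σ)) / cosh((β/2) h̃_x(σ) + q σ_x)` and
`p_x(σ) = e^{-(β/2) h̃_x(σ) σ_x} / (2 cosh((β/2) h̃_x(σ)))`. -/
theorem sca_transition_prob_epsilon_p_decomposition
    (J : V → V → ℝ) (h : V → ℝ) (β q : ℝ) (hβ : 0 ≤ β) (hq : 0 ≤ q)
    (hJ : ∀ x y, J x y = J y x) (hJ0 : ∀ x, J x x = 0)
    (ε : (V → ℤˣ) → V → ℝ)
    (hε : ∀ σ x, ε σ x = Real.exp (-q) * Real.cosh (β / 2 * cavity J h σ x) /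
      Real.cosh (β / 2 * cavity J h σ x + q * sp σ x))
    (p : (V → ℤˣ) → V → ℝ)
    (hp : ∀ σ x, p σ x = Real.exp (-(β / 2) * cavity J h σ x * sp σ x) /
      (2 * Real.cosh (β / 2 * cavity J h σ x))) :
    ∀ σ τ : V → ℤˣ,
      PSCA J h β q σ τ =
        (∏ x ∈ Dset σ τ, ε σ x * p σ x) *
          ∏ y ∈ Finset.univ \ Dset σ τ, (1 - ε σ y * p σ y) := by
  intro σ τ
  have hC : Real.exp (β / 2 * ∑ x, h x * sp σ x) ≠ 0 := Real.exp_ne_zero _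
  rw [PSCA, wSCA_eq J h β q hJ σ, exp_decomp J h β q hJ σ τ, Real.exp_add, Real.exp_sum,
    mul_div_mul_left _ _ hC, ← Finset.prod_div_distrib]
  have hD : ∀ x ∈ Dset σ τ, ε σ x * p σ x
      = Real.exp ((β / 2 * cavity J h σ x + q * sp σ x) * sp τ x)
        / (2 * Real.cosh (β / 2 * cavity J h σ x + q * sp σ x)) := by
    intro x hx
    have hne : σ x ≠ τ x := by simpa [Dset] using hx
    rw [hε, hp, sp_of_ne hne,
      show -(β / 2) * cavity J h σ x * sp σ x = -(β / 2 * cavity J h σ x) * sp σ x by ring]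
    exact per_site_flip (β / 2 * cavity J h σ x) q (sp σ x) (sp_cases σ x)
  have hS : ∀ x ∈ Finset.univ \ Dset σ τ, 1 - ε σ x * p σ x
      = Real.exp ((β / 2 * cavity J h σ x + q * sp σ x) * sp τ x)
        / (2 * Real.cosh (β / 2 * cavity J h σ x + q * sp σ x)) := by
    intro x hx
    have heq : σ x = τ x := by simpa [Dset] using hx
    have hsp : sp τ x = sp σ x := by rw [sp, sp, ← heq]
    rw [hε, hp, hsp,
      show -(β / 2) * cavity J h σ x * sp σ x = -(β / 2 * cavity J h σ x) * sp σ x by ring]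
    exact per_site_stay (β / 2 * cavity J h σ x) q (sp σ x) (sp_cases σ x)
  rw [Finset.prod_congr rfl hD, Finset.prod_congr rfl hS, mul_comm,
    Finset.prod_sdiff (Finset.subset_univ _)]
end

section
/- For every spin configuration σ ∈ {±1}^V, the ratio of the SCA weight to the Boltzmann weight factorizes as w^SCA_{β,q}(σ) / w^G_β(σ) = e^{|V|·q} · Π_{x∈V} (1 + δ·φ_x(σ)), where δ = e^{−2q} and φ_x(σ) = e^{−β·h̃_x(σ)·σ_x}. -/
open Finset Real

variable {V : Type*}

variable [Fintype V] [DecidableEq V]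

/-- the ratio of the SCA weight to the Boltzmann weight factorizes as
`w^SCA_{β,q}(σ) / w^G_β(σ) = e^{|V| q} Π_x (1 + δ φ_x(σ))`, where `δ = e^{-2q}` and
`φ_x(σ) = e^{-β h̃_x(σ) σ_x}`. -/
theorem sca_weight_ratio_factorizes
    (J : V → V → ℝ) (h : V → ℝ) (β q : ℝ) (hβ : 0 ≤ β) (hq : 0 ≤ q)
    (hJ : ∀ x y, J x y = J y x) (hJ0 : ∀ x, J x x = 0)
    (δ : ℝ) (hδ : δ = Real.exp (-(2 * q)))
    (φ : (V → ℤˣ) → V → ℝ)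
    (hφ : ∀ σ x, φ σ x = Real.exp (-β * cavity J h σ x * sp σ x)) :
    ∀ σ : V → ℤˣ,
      wSCA J h β q σ / wG J h β σ =
        Real.exp ((Fintype.card V : ℝ) * q) * ∏ x, (1 + δ * φ σ x) := by
  intro σ
  have hwG : wG J h β σ ≠ 0 := (Real.exp_pos _).ne'
  rw [div_eq_iff hwG]
  -- exponent split into per-site terms
  have hswap : ∀ τ : V → ℤˣ, ∑ x, ∑ y, J x y * sp σ x * sp τ y
      = ∑ x, (∑ y, J x y * sp σ y) * sp τ x := by
    intro τ
    rw [Finset.sum_comm]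
    refine Finset.sum_congr rfl fun x _ => ?_
    rw [Finset.sum_mul]
    exact Finset.sum_congr rfl fun y _ => by rw [hJ y x]
  have hexp : ∀ τ : V → ℤˣ, -β * Ham2 J h σ τ + q * ∑ x, sp σ x * sp τ x
      = ∑ x, (β / 2 * cavity J h σ x * sp τ x + β / 2 * (h x * sp σ x)
          + q * (sp σ x * sp τ x)) := by
    intro τ
    have e : ∑ x, (β / 2 * cavity J h σ x * sp τ x + β / 2 * (h x * sp σ x)
          + q * (sp σ x * sp τ x))
        = β / 2 * (∑ x, (∑ y, J x y * sp σ y) * sp τ x)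
          + β / 2 * (∑ x, h x * (sp σ x + sp τ x))
          + q * ∑ x, sp σ x * sp τ x := by
      rw [Finset.mul_sum, Finset.mul_sum, Finset.mul_sum, ← Finset.sum_add_distrib,
        ← Finset.sum_add_distrib]
      exact Finset.sum_congr rfl fun x _ => by rw [cavity]; ring
    rw [e, ← hswap τ, Ham2]
    ring
  have huniv : (Finset.univ : Finset ℤˣ) = {1, -1} := by decide
  have hsite : ∀ x, (∑ ε : ℤˣ, Real.exp (β / 2 * cavity J h σ x * ((ε : ℤ) : ℝ)
        + β / 2 * (h x * sp σ x) + q * (sp σ x * ((ε : ℤ) : ℝ))))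
      = Real.exp q * Real.exp (β / 2 * (h x * sp σ x + cavity J h σ x * sp σ x))
        * (1 + δ * φ σ x) := by
    intro x
    rw [huniv, Finset.sum_pair (by decide : (1 : ℤˣ) ≠ -1), hδ, hφ]
    rcases Int.units_eq_one_or (σ x) with hs | hs <;>
      simp only [sp, hs, Units.val_one, Units.val_neg, Int.cast_one, Int.cast_neg] <;>
      rw [mul_add, mul_one] <;>
      simp only [← Real.exp_add, mul_one]
    · congr 1 <;> exact congrArg Real.exp (by ring)
    · rw [add_comm (Real.exp _)]
      congr 1 <;> exact congrArg Real.exp (by ring)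
  have key : wSCA J h β q σ
      = ∏ x, (Real.exp q * Real.exp (β / 2 * (h x * sp σ x + cavity J h σ x * sp σ x))
          * (1 + δ * φ σ x)) := by
    rw [wSCA]
    have e1 : ∀ τ : V → ℤˣ, Real.exp (-β * Ham2 J h σ τ + q * ∑ x, sp σ x * sp τ x)
        = ∏ x, Real.exp (β / 2 * cavity J h σ x * ((τ x : ℤ) : ℝ)
            + β / 2 * (h x * sp σ x) + q * (sp σ x * ((τ x : ℤ) : ℝ))) := by
      intro τ
      rw [hexp τ, Real.exp_sum]
      exact Finset.prod_congr rfl fun x _ => by simp [sp]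
    simp only [e1]
    rw [← Fintype.prod_sum (fun (x : V) (ε : ℤˣ) => Real.exp (β / 2 * cavity J h σ x
      * ((ε : ℤ) : ℝ) + β / 2 * (h x * sp σ x) + q * (sp σ x * ((ε : ℤ) : ℝ))))]
    exact Finset.prod_congr rfl fun x _ => hsite x
  have hgibbs : ∑ x, β / 2 * (h x * sp σ x + cavity J h σ x * sp σ x)
      = -β * Ham J h σ := by
    have e2 : ∑ x, β / 2 * (h x * sp σ x + cavity J h σ x * sp σ x)
        = β / 2 * (∑ x, (∑ y, J x y * sp σ y) * sp σ x) + β * ∑ x, h x * sp σ x := by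
      rw [Finset.mul_sum, Finset.mul_sum, ← Finset.sum_add_distrib]
      exact Finset.sum_congr rfl fun x _ => by rw [cavity]; ring
    have hdd : ∑ x, ∑ y, J x y * sp σ x * sp σ y
        = ∑ x, (∑ y, J x y * sp σ y) * sp σ x := by
      refine Finset.sum_congr rfl fun x _ => ?_
      rw [Finset.sum_mul]
      exact Finset.sum_congr rfl fun y _ => by ring
    rw [e2, Ham, hdd]
    ring
  rw [key, Finset.prod_mul_distrib, Finset.prod_mul_distrib, Finset.prod_const,
    ← Real.exp_sum, hgibbs, wG, Finset.card_univ, ← Real.exp_nat_mul]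
  push_cast
  ring
end

section
/- For all spin configurations σ, τ ∈ {±1}^V, the ratio of SCA weights satisfies w^SCA_{β,q}(σ) / w^SCA_{β,q}(τ) = (w^G_β(σ) / w^G_β(τ)) · Π_{x∈V} (1 + δ·φ_x(σ)) / (1 + δ·φ_x(τ)), where δ = e^{−2q} and φ_x(σ) = e^{−β·h̃_x(σ)·σ_x}. -/
open Finset Real

variable {V : Type*}

variable [Fintype V] [DecidableEq V]

lemma sum_units_pm (f : ℤˣ → ℝ) : ∑ t : ℤˣ, f t = f 1 + f (-1) := by
  have huniv : (Finset.univ : Finset ℤˣ) = {1, -1} := by decide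
  rw [huniv, Finset.sum_insert (by decide), Finset.sum_singleton]

lemma exp_decomp_s10 (A B C D E F : ℝ) (h1 : A = C + D) (h2 : B = C + D + E + F) :
    Real.exp A + Real.exp B = Real.exp C * Real.exp D * (1 + Real.exp E * Real.exp F) := by
  rw [mul_add, mul_one, ← Real.exp_add C D, ← Real.exp_add E F, ← Real.exp_add (C + D) (E + F)]
  rw [h1, h2]
  congr 1
  exact congrArg Real.exp (by ring)

lemma wSCA_eq_prod (J : V → V → ℝ) (h : V → ℝ) (β q : ℝ)
    (hJ : ∀ x y, J x y = J y x) (σ : V → ℤˣ) :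
    wSCA J h β q σ = Real.exp (q * Fintype.card V) * wG J h β σ *
      ∏ x, (1 + Real.exp (-(2 * q)) * Real.exp (-β * cavity J h σ x * sp σ x)) := by
  set a : V → ℝ := fun x => β / 2 * cavity J h σ x + q * sp σ x with ha
  set c : ℝ := β / 2 * ∑ x, h x * sp σ x with hc
  have key : ∀ τ : V → ℤˣ,
      -β * Ham2 J h σ τ + q * ∑ x, sp σ x * sp τ x = c + ∑ x, sp τ x * a x := by
    intro τ
    have hswap : ∑ x, ∑ y, J x y * sp σ x * sp τ y
        = ∑ x, sp τ x * ∑ y, J x y * sp σ y := by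
      rw [Finset.sum_comm]
      refine Finset.sum_congr rfl fun x _ => ?_
      rw [Finset.mul_sum]
      refine Finset.sum_congr rfl fun y _ => ?_
      rw [hJ y x]; ring
    have e1 : ∑ x, h x * (sp σ x + sp τ x)
        = ∑ x, h x * sp σ x + ∑ x, h x * sp τ x := by
      rw [← Finset.sum_add_distrib]
      exact Finset.sum_congr rfl fun x _ => mul_add _ _ _
    have e2 : ∑ x, sp τ x * a x
        = β / 2 * ∑ x, sp τ x * ∑ y, J x y * sp σ y
          + β / 2 * ∑ x, h x * sp τ x + q * ∑ x, sp σ x * sp τ x := by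
      rw [Finset.mul_sum, Finset.mul_sum, Finset.mul_sum, ← Finset.sum_add_distrib,
        ← Finset.sum_add_distrib]
      refine Finset.sum_congr rfl fun x _ => ?_
      simp only [ha, cavity]
      ring
    simp only [Ham2]
    rw [hswap, e1, e2, hc]; ring
  have step1 : wSCA J h β q σ
      = Real.exp c * ∑ τ : V → ℤˣ, ∏ x, Real.exp (sp τ x * a x) := by
    simp only [wSCA]
    rw [Finset.mul_sum]
    refine Finset.sum_congr rfl fun τ _ => ?_
    rw [key τ, Real.exp_add, Real.exp_sum]
  have step2 : ∑ τ : V → ℤˣ, ∏ x, Real.exp (sp τ x * a x)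
      = ∏ x, ∑ t : ℤˣ, Real.exp (((t : ℤ) : ℝ) * a x) :=
    (Fintype.prod_sum fun x (t : ℤˣ) => Real.exp (((t : ℤ) : ℝ) * a x)).symm
  have step3 : ∀ x, ∑ t : ℤˣ, Real.exp (((t : ℤ) : ℝ) * a x)
      = Real.exp q * Real.exp (β / 2 * cavity J h σ x * sp σ x)
        * (1 + Real.exp (-(2 * q)) * Real.exp (-β * cavity J h σ x * sp σ x)) := by
    intro x
    rw [sum_units_pm]
    simp only [Units.val_one, Units.val_neg, Int.cast_one, Int.cast_neg, one_mul, neg_mul,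
      neg_neg]
    rcases Int.units_eq_one_or (σ x) with hs | hs
    · have hsp : sp σ x = 1 := by simp [sp, hs]
      exact exp_decomp_s10 _ _ _ _ _ _ (by simp only [ha, hsp]; ring)
        (by simp only [ha, hsp]; ring)
    · have hsp : sp σ x = -1 := by simp [sp, hs]
      rw [add_comm]
      exact exp_decomp_s10 _ _ _ _ _ _ (by simp only [ha, hsp]; ring)
        (by simp only [ha, hsp]; ring)
  have hexp : c + ∑ x, β / 2 * cavity J h σ x * sp σ x = -β * Ham J h σ := by
    have e3 : ∑ x, β / 2 * cavity J h σ x * sp σ x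
        = β / 2 * ∑ x, ∑ y, J x y * sp σ x * sp σ y + β / 2 * ∑ x, h x * sp σ x := by
      rw [Finset.mul_sum, Finset.mul_sum, ← Finset.sum_add_distrib]
      refine Finset.sum_congr rfl fun x _ => ?_
      have hinner : (∑ y, J x y * sp σ y) * sp σ x = ∑ y, J x y * sp σ x * sp σ y := by
        rw [Finset.sum_mul]
        exact Finset.sum_congr rfl fun y _ => by ring
      simp only [cavity]
      rw [← hinner]; ring
    simp only [Ham]
    rw [e3, hc]; ring
  calc wSCA J h β q σ
      = Real.exp c * ∑ τ : V → ℤˣ, ∏ x, Real.exp (sp τ x * a x) := step1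
    _ = Real.exp c * ∏ x, ∑ t : ℤˣ, Real.exp (((t : ℤ) : ℝ) * a x) := by rw [step2]
    _ = Real.exp c * ∏ x, (Real.exp q * Real.exp (β / 2 * cavity J h σ x * sp σ x)
          * (1 + Real.exp (-(2 * q)) * Real.exp (-β * cavity J h σ x * sp σ x))) := by
        rw [Finset.prod_congr rfl fun x _ => step3 x]
    _ = Real.exp (q * Fintype.card V) * wG J h β σ *
          ∏ x, (1 + Real.exp (-(2 * q)) * Real.exp (-β * cavity J h σ x * sp σ x)) := by
        rw [Finset.prod_mul_distrib, Finset.prod_mul_distrib, Finset.prod_const,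
          Finset.card_univ]
        have p1 : Real.exp q ^ Fintype.card V = Real.exp (q * Fintype.card V) := by
          rw [← Real.exp_nat_mul, mul_comm]
        have p2 : ∏ x, Real.exp (β / 2 * cavity J h σ x * sp σ x)
            = Real.exp (∑ x, β / 2 * cavity J h σ x * sp σ x) := (Real.exp_sum _ _).symm
        rw [p1, p2]
        simp only [wG]
        rw [← hexp, Real.exp_add]
        ring

/-- the ratio of SCA weights satisfies
`w^SCA_{β,q}(σ) / w^SCA_{β,q}(τ) = (w^G_β(σ)/w^G_β(τ)) Π_x (1 + δ φ_x(σ))/(1 + δ φ_x(τ))`,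
where `δ = e^{-2q}` and `φ_x(σ) = e^{-β h̃_x(σ) σ_x}`. -/
theorem sca_weight_ratio_formula
    (J : V → V → ℝ) (h : V → ℝ) (β q : ℝ) (hβ : 0 ≤ β) (hq : 0 ≤ q)
    (hJ : ∀ x y, J x y = J y x) (hJ0 : ∀ x, J x x = 0)
    (δ : ℝ) (hδ : δ = Real.exp (-(2 * q)))
    (φ : (V → ℤˣ) → V → ℝ)
    (hφ : ∀ σ x, φ σ x = Real.exp (-β * cavity J h σ x * sp σ x)) :
    ∀ σ τ : V → ℤˣ,
      wSCA J h β q σ / wSCA J h β q τ =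
        wG J h β σ / wG J h β τ * ∏ x, (1 + δ * φ σ x) / (1 + δ * φ τ x) := by
  intro σ τ
  subst hδ
  simp only [hφ]
  rw [wSCA_eq_prod J h β q hJ σ, wSCA_eq_prod J h β q hJ τ, Finset.prod_div_distrib]
  have hgen : ∀ (E A B P Q : ℝ), E ≠ 0 → E * A * P / (E * B * Q) = A / B * (P / Q) := by
    intro E A B P Q hE
    rw [mul_assoc, mul_assoc, mul_div_mul_left _ _ hE, div_mul_div_comm]
  exact hgen _ _ _ _ _ (Real.exp_ne_zero _)
end

section
/- The range of the Hamiltonian dominates the square root of the total coupling strength: R_H ≥ √v, where R_H = max_{σ,τ∈{±1}^V} |H(σ) − H(τ)| and v = Σ_{{x,y}: x≠y} J_{x,y}² + Σ_{x∈V} h_x². -/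
open Finset Real

variable {V : Type*}

variable [Fintype V] [DecidableEq V]

set_option linter.unusedSectionVars false
lemma sp_flip (σ : V → ℤˣ) (t y : V) :
    sp (spinFlip σ t) y = if y = t then -(sp σ y) else sp σ y := by
  simp only [sp, spinFlip, Function.update_apply]
  split <;> simp_all

lemma sp_mul_self (σ : V → ℤˣ) (x : V) : sp σ x * sp σ x = 1 := by
  simp only [sp]
  rcases Int.units_eq_one_or (σ x) with h | h <;> simp [h]

lemma flip_invol (t : V) : Function.Involutive (fun σ : V → ℤˣ => spinFlip σ t) := by
  intro σ
  funext y
  simp only [spinFlip, Function.update_apply]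
  split <;> simp_all

lemma sum_flip (f : (V → ℤˣ) → ℝ) (t : V) :
    ∑ σ : V → ℤˣ, f (spinFlip σ t) = ∑ σ : V → ℤˣ, f σ :=
  Equiv.sum_comp ((flip_invol t).toPerm) f

lemma sum_neg_zero (f : (V → ℤˣ) → ℝ) (t : V)
    (hf : ∀ σ, f (spinFlip σ t) = -f σ) : ∑ σ : V → ℤˣ, f σ = 0 := by
  have h := sum_flip f t
  simp only [hf] at h
  rw [Finset.sum_neg_distrib] at h
  linarith

lemma M1 (x : V) : ∑ σ : V → ℤˣ, sp σ x = 0 := by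
  apply sum_neg_zero _ x
  intro σ
  rw [sp_flip, if_pos rfl]

lemma sum_one : ∑ _σ : V → ℤˣ, (1 : ℝ) = (Fintype.card (V → ℤˣ) : ℝ) := by
  simp [Finset.sum_const, Finset.card_univ]

lemma M2 (x y : V) :
    ∑ σ : V → ℤˣ, sp σ x * sp σ y
      = if y = x then (Fintype.card (V → ℤˣ) : ℝ) else 0 := by
  by_cases hxy : y = x
  · subst hxy
    simp only [sp_mul_self, if_pos rfl]
    exact sum_one
  · rw [if_neg hxy]
    apply sum_neg_zero _ x
    intro σ
    rw [sp_flip, sp_flip, if_pos rfl, if_neg hxy]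
    ring

lemma M3 (x y z : V) (hxy : x ≠ y) :
    ∑ σ : V → ℤˣ, sp σ x * sp σ y * sp σ z = 0 := by
  by_cases hzx : z = x
  · subst hzx
    have : ∀ σ : V → ℤˣ, sp σ z * sp σ y * sp σ z = sp σ y := by
      intro σ
      rw [show sp σ z * sp σ y * sp σ z = sp σ z * sp σ z * sp σ y by ring,
        sp_mul_self, one_mul]
    simp only [this]
    exact M1 y
  · by_cases hzy : z = y
    · subst hzy
      have : ∀ σ : V → ℤˣ, sp σ x * sp σ z * sp σ z = sp σ x := by
        intro σ
        rw [mul_assoc, sp_mul_self, mul_one]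
      simp only [this]
      exact M1 x
    · apply sum_neg_zero _ z
      intro σ
      rw [sp_flip, sp_flip, sp_flip, if_neg (fun hh => hzx hh.symm),
        if_neg (fun hh => hzy hh.symm), if_pos rfl]
      ring

lemma M4 (x y z w : V) (hxy : x ≠ y) :
    ∑ σ : V → ℤˣ, sp σ x * sp σ y * (sp σ z * sp σ w)
      = if (z = x ∧ w = y) ∨ (z = y ∧ w = x) then (Fintype.card (V → ℤˣ) : ℝ)
        else 0 := by
  by_cases hzx : z = x
  · subst hzx
    have key : ∀ σ : V → ℤˣ, sp σ z * sp σ y * (sp σ z * sp σ w) = sp σ y * sp σ w := by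
      intro σ
      rw [show sp σ z * sp σ y * (sp σ z * sp σ w)
          = sp σ z * sp σ z * (sp σ y * sp σ w) by ring, sp_mul_self, one_mul]
    simp only [key, M2]
    by_cases hwy : w = y
    · simp [hwy]
    · rw [if_neg hwy, if_neg]
      rintro (⟨-, hw⟩ | ⟨hz, -⟩)
      · exact hwy hw
      · exact hxy hz
  · by_cases hzy : z = y
    · subst hzy
      have key : ∀ σ : V → ℤˣ, sp σ x * sp σ z * (sp σ z * sp σ w) = sp σ x * sp σ w := by
        intro σ
        rw [show sp σ x * sp σ z * (sp σ z * sp σ w)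
            = sp σ z * sp σ z * (sp σ x * sp σ w) by ring, sp_mul_self, one_mul]
      simp only [key, M2]
      by_cases hwx : w = x
      · simp [hwx, hzx]
      · rw [if_neg hwx, if_neg]
        rintro (⟨hz, -⟩ | ⟨-, hw⟩)
        · exact hzx hz
        · exact hwx hw
    · rw [if_neg (by rintro (⟨hz, -⟩ | ⟨hz, -⟩) <;> [exact hzx hz; exact hzy hz])]
      by_cases hwz : w = z
      · subst hwz
        have key : ∀ σ : V → ℤˣ, sp σ x * sp σ y * (sp σ w * sp σ w) = sp σ x * sp σ y := by
          intro σ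
          rw [sp_mul_self, mul_one]
        simp only [key, M2]
        exact if_neg fun hh => hxy hh.symm
      · apply sum_neg_zero _ z
        intro σ
        rw [sp_flip, sp_flip, sp_flip, sp_flip, if_neg (fun hh => hzx hh.symm),
          if_neg (fun hh => hzy hh.symm), if_pos rfl, if_neg hwz]
        ring



lemma sumHam (J : V → V → ℝ) (h : V → ℝ) (hJ0 : ∀ x, J x x = 0) :
    ∑ σ : V → ℤˣ, Ham J h σ = 0 := by
  have hQ : ∑ σ : V → ℤˣ, ∑ x, ∑ y, J x y * sp σ x * sp σ y = 0 := by
    rw [Finset.sum_comm]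
    apply Finset.sum_eq_zero
    intro x _
    rw [Finset.sum_comm]
    apply Finset.sum_eq_zero
    intro y _
    by_cases hxy : x = y
    · subst hxy
      simp [hJ0 x]
    · have : ∑ σ : V → ℤˣ, J x y * sp σ x * sp σ y
          = J x y * ∑ σ : V → ℤˣ, sp σ x * sp σ y := by
        rw [Finset.mul_sum]
        exact Finset.sum_congr rfl fun σ _ => by ring
      rw [this, M2, if_neg (fun hh => hxy hh.symm), mul_zero]
  have hL : ∑ σ : V → ℤˣ, ∑ x, h x * sp σ x = 0 := by
    rw [Finset.sum_comm]
    apply Finset.sum_eq_zero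
    intro x _
    rw [← Finset.mul_sum, M1, mul_zero]
  simp only [Ham]
  rw [Finset.sum_sub_distrib, ← Finset.mul_sum, hQ, hL, mul_zero, sub_zero]

lemma sumQsq (J : V → V → ℝ) (hJ : ∀ x y, J x y = J y x) (hJ0 : ∀ x, J x x = 0) :
    ∑ σ : V → ℤˣ, (∑ x, ∑ y, J x y * sp σ x * sp σ y) ^ 2
      = 2 * (Fintype.card (V → ℤˣ) : ℝ) * ∑ x, ∑ y, (J x y) ^ 2 := by
  set N : ℝ := (Fintype.card (V → ℤˣ) : ℝ) with hN
  have expand : ∀ σ : V → ℤˣ, (∑ x, ∑ y, J x y * sp σ x * sp σ y) ^ 2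
      = ∑ x, ∑ z, ∑ y, ∑ w,
          (J x y * J z w) * (sp σ x * sp σ y * (sp σ z * sp σ w)) := by
    intro σ
    rw [sq, Finset.sum_mul_sum]
    refine Finset.sum_congr rfl fun x _ => Finset.sum_congr rfl fun z _ => ?_
    rw [Finset.sum_mul_sum]
    exact Finset.sum_congr rfl fun y _ => Finset.sum_congr rfl fun w _ => by ring
  have push : ∑ σ : V → ℤˣ, ∑ x, ∑ z, ∑ y, ∑ w,
        (J x y * J z w) * (sp σ x * sp σ y * (sp σ z * sp σ w))
      = ∑ x, ∑ z, ∑ y, ∑ w, ∑ σ : V → ℤˣ,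
        (J x y * J z w) * (sp σ x * sp σ y * (sp σ z * sp σ w)) := by
    rw [Finset.sum_comm]
    refine Finset.sum_congr rfl fun x _ => ?_
    rw [Finset.sum_comm]
    refine Finset.sum_congr rfl fun z _ => ?_
    rw [Finset.sum_comm]
    refine Finset.sum_congr rfl fun y _ => ?_
    rw [Finset.sum_comm]
  simp only [expand]
  rw [push]
  have inner : ∀ x y : V, ∑ z, ∑ w, ∑ σ : V → ℤˣ,
        (J x y * J z w) * (sp σ x * sp σ y * (sp σ z * sp σ w))
      = 2 * N * (J x y) ^ 2 := by
    intro x y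
    by_cases hxy : x = y
    · subst hxy
      rw [hJ0 x]
      simp
    · have step : ∀ z w : V, ∑ σ : V → ℤˣ,
          (J x y * J z w) * (sp σ x * sp σ y * (sp σ z * sp σ w))
            = (if w = y ∧ z = x then J x y * J z w * N else 0)
              + (if w = x ∧ z = y then J x y * J z w * N else 0) := by
        intro z w
        rw [← Finset.mul_sum, M4 x y z w hxy]
        by_cases h1 : w = y ∧ z = x <;> by_cases h2 : w = x ∧ z = y
        · exact absurd (h1.2.symm.trans h2.2) hxy
        · rw [if_pos (Or.inl ⟨h1.2, h1.1⟩), if_pos h1, if_neg h2, add_zero, mul_assoc]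
        · rw [if_pos (Or.inr ⟨h2.2, h2.1⟩), if_neg h1, if_pos h2, zero_add, mul_assoc]
        · rw [if_neg (by tauto), if_neg h1, if_neg h2, add_zero, mul_zero]
      simp only [step, Finset.sum_add_distrib, ite_and, Finset.sum_ite_eq',
        Finset.mem_univ, if_pos, Finset.sum_ite_eq]
      rw [hJ y x]
      ring
  calc ∑ x, ∑ z, ∑ y, ∑ w, ∑ σ : V → ℤˣ,
        (J x y * J z w) * (sp σ x * sp σ y * (sp σ z * sp σ w))
      = ∑ x, ∑ y, ∑ z, ∑ w, ∑ σ : V → ℤˣ,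
        (J x y * J z w) * (sp σ x * sp σ y * (sp σ z * sp σ w)) := by
        exact Finset.sum_congr rfl fun x _ => Finset.sum_comm
    _ = ∑ x, ∑ y, 2 * N * (J x y) ^ 2 := by
        exact Finset.sum_congr rfl fun x _ => Finset.sum_congr rfl fun y _ => inner x y
    _ = 2 * N * ∑ x, ∑ y, (J x y) ^ 2 := by
        rw [Finset.mul_sum]
        exact Finset.sum_congr rfl fun x _ => by rw [Finset.mul_sum]

lemma sumQL (J : V → V → ℝ) (h : V → ℝ) (hJ0 : ∀ x, J x x = 0) :
    ∑ σ : V → ℤˣ, (∑ x, ∑ y, J x y * sp σ x * sp σ y) * (∑ x, h x * sp σ x) = 0 := by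
  have expand : ∀ σ : V → ℤˣ, (∑ x, ∑ y, J x y * sp σ x * sp σ y) * (∑ x, h x * sp σ x)
      = ∑ x, ∑ z, ∑ y, (J x y * h z) * (sp σ x * sp σ y * sp σ z) := by
    intro σ
    rw [Finset.sum_mul_sum]
    refine Finset.sum_congr rfl fun x _ => Finset.sum_congr rfl fun z _ => ?_
    rw [Finset.sum_mul]
    exact Finset.sum_congr rfl fun y _ => by ring
  simp only [expand]
  rw [Finset.sum_comm]
  apply Finset.sum_eq_zero
  intro x _
  rw [Finset.sum_comm]
  apply Finset.sum_eq_zero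
  intro z _
  rw [Finset.sum_comm]
  apply Finset.sum_eq_zero
  intro y _
  by_cases hxy : x = y
  · subst hxy
    simp [hJ0 x]
  · rw [← Finset.mul_sum, M3 x y z hxy, mul_zero]

lemma sumLsq (h : V → ℝ) :
    ∑ σ : V → ℤˣ, (∑ x, h x * sp σ x) ^ 2
      = (Fintype.card (V → ℤˣ) : ℝ) * ∑ x, (h x) ^ 2 := by
  set N : ℝ := (Fintype.card (V → ℤˣ) : ℝ) with hN
  have expand : ∀ σ : V → ℤˣ, (∑ x, h x * sp σ x) ^ 2
      = ∑ x, ∑ z, (h x * h z) * (sp σ x * sp σ z) := by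
    intro σ
    rw [sq, Finset.sum_mul_sum]
    exact Finset.sum_congr rfl fun x _ => Finset.sum_congr rfl fun z _ => by ring
  simp only [expand]
  rw [Finset.sum_comm]
  have : ∀ x : V, ∑ σ : V → ℤˣ, ∑ z, (h x * h z) * (sp σ x * sp σ z)
      = N * (h x) ^ 2 := by
    intro x
    rw [Finset.sum_comm]
    have inner : ∀ z : V, ∑ σ : V → ℤˣ, (h x * h z) * (sp σ x * sp σ z)
        = if z = x then h x * h z * N else 0 := by
      intro z
      rw [← Finset.mul_sum, M2]
      by_cases hzx : z = x
      · rw [if_pos hzx, if_pos hzx]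
      · rw [if_neg hzx, if_neg hzx, mul_zero]
    simp only [inner, Finset.sum_ite_eq', Finset.mem_univ, if_pos]
    ring
  simp only [this]
  rw [← Finset.mul_sum]

lemma sumHamSq (J : V → V → ℝ) (h : V → ℝ)
    (hJ : ∀ x y, J x y = J y x) (hJ0 : ∀ x, J x x = 0) :
    ∑ σ : V → ℤˣ, (Ham J h σ) ^ 2 = (Fintype.card (V → ℤˣ) : ℝ) * vtot J h := by
  set N : ℝ := (Fintype.card (V → ℤˣ) : ℝ) with hN
  have expand : ∀ σ : V → ℤˣ, (Ham J h σ) ^ 2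
      = (1 / 4) * (∑ x, ∑ y, J x y * sp σ x * sp σ y) ^ 2
        + (∑ x, ∑ y, J x y * sp σ x * sp σ y) * (∑ x, h x * sp σ x)
        + (∑ x, h x * sp σ x) ^ 2 := by
    intro σ
    simp only [Ham]
    ring
  simp only [expand]
  rw [Finset.sum_add_distrib, Finset.sum_add_distrib, ← Finset.mul_sum,
    sumQsq J hJ hJ0, sumQL J h hJ0, sumLsq h, add_zero]
  have hfilter : ∀ x : V, ∑ y ∈ Finset.univ.filter (fun y => y ≠ x), (J x y) ^ 2
      = ∑ y, (J x y) ^ 2 := by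
    intro x
    rw [Finset.sum_filter]
    refine Finset.sum_congr rfl fun y _ => ?_
    by_cases hyx : y = x
    · subst hyx
      rw [if_neg (by simp), hJ0, zero_pow two_ne_zero]
    · rw [if_pos hyx]
  simp only [vtot, hfilter]
  ring

/-- the range of the Hamiltonian dominates the square root of the total
coupling strength, `R_H ≥ √v`, where `R_H = max_{σ,τ} |H(σ) - H(τ)|` and
`v = Σ_{{x,y}:x≠y} J_{x,y}² + Σ_x h_x²`. -/
theorem range_ge_sqrt_v
    (J : V → V → ℝ) (h : V → ℝ)
    (hJ : ∀ x y, J x y = J y x) (hJ0 : ∀ x, J x x = 0)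
    (RH : ℝ)
    (hR : IsGreatest {r : ℝ | ∃ σ τ : V → ℤˣ, r = |Ham J h σ - Ham J h τ|} RH) :
    RH ≥ Real.sqrt (vtot J h) := by
  have hne : (Finset.univ : Finset (V → ℤˣ)).Nonempty := Finset.univ_nonempty
  have hbig : ∃ σ : V → ℤˣ, vtot J h ≤ (Ham J h σ) ^ 2 := by
    have hsum : ∑ _σ : V → ℤˣ, vtot J h ≤ ∑ σ : V → ℤˣ, (Ham J h σ) ^ 2 := by
      rw [sumHamSq J h hJ hJ0, Finset.sum_const, Finset.card_univ, nsmul_eq_mul]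
    obtain ⟨σ, -, hσ⟩ := Finset.exists_le_of_sum_le hne hsum
    exact ⟨σ, hσ⟩
  obtain ⟨σ, hσ⟩ := hbig
  have hneg : ∃ τ : V → ℤˣ, Ham J h τ ≤ 0 := by
    have hsum : ∑ τ : V → ℤˣ, Ham J h τ ≤ ∑ _τ : V → ℤˣ, (0 : ℝ) := by
      rw [sumHam J h hJ0, Finset.sum_const, smul_zero]
    obtain ⟨τ, -, hτ⟩ := Finset.exists_le_of_sum_le hne hsum
    exact ⟨τ, hτ⟩
  have hpos : ∃ τ : V → ℤˣ, 0 ≤ Ham J h τ := by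
    have hsum : ∑ _τ : V → ℤˣ, (0 : ℝ) ≤ ∑ τ : V → ℤˣ, Ham J h τ := by
      rw [sumHam J h hJ0, Finset.sum_const, smul_zero]
    obtain ⟨τ, -, hτ⟩ := Finset.exists_le_of_sum_le hne hsum
    exact ⟨τ, hτ⟩
  have habs : Real.sqrt (vtot J h) ≤ |Ham J h σ| := by
    calc Real.sqrt (vtot J h) ≤ Real.sqrt ((Ham J h σ) ^ 2) := Real.sqrt_le_sqrt hσ
      _ = |Ham J h σ| := Real.sqrt_sq_eq_abs _
  by_cases hs : 0 ≤ Ham J h σ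
  · obtain ⟨τ, hτ⟩ := hneg
    have hmem := hR.2 ⟨σ, τ, rfl⟩
    have hle : Ham J h σ - Ham J h τ ≤ |Ham J h σ - Ham J h τ| := le_abs_self _
    rw [abs_of_nonneg hs] at habs
    linarith
  · obtain ⟨τ, hτ⟩ := hpos
    have hmem := hR.2 ⟨τ, σ, rfl⟩
    have hle : Ham J h τ - Ham J h σ ≤ |Ham J h τ - Ham J h σ| := le_abs_self _
    rw [abs_of_neg (lt_of_not_ge hs)] at habs
    linarith
end

section
/- (Key bound in the proof of Proposition 4.1) Let K̄ = max{|h̃_x(σ)| : x ∈ V, σ ∈ {±1}^V}, δ = e^{−2q}, and φ_x(σ) = e^{−β·h̃_x(σ)·σ_x}. Then for all spin configurations σ, τ ∈ {±1}^V, Σ_{x∈V} log(1 + δ·(φ_x(σ) − φ_x(τ))/(1 + δ·φ_x(τ))) ≤ 2·|V|·β·δ·K̄·e^{β·K̄}. -/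
open Finset Real

variable {V : Type*}

variable [Fintype V] [DecidableEq V]

/-- key bound in the proof of Proposition 4.1: with `δ = e^{-2q}`,
`φ_x(σ) = e^{-β h̃_x(σ) σ_x}` and `K̄ = max{|h̃_x(σ)|}`, for all `σ, τ`,
`Σ_x log(1 + δ(φ_x(σ) - φ_x(τ))/(1 + δ φ_x(τ))) ≤ 2 |V| β δ K̄ e^{β K̄}`. -/
theorem sum_log_bound
    (J : V → V → ℝ) (h : V → ℝ) (β q : ℝ) (hβ : 0 ≤ β) (hq : 0 ≤ q)
    (hJ : ∀ x y, J x y = J y x) (hJ0 : ∀ x, J x x = 0)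
    (Kbar : ℝ)
    (hK : IsGreatest {r : ℝ | ∃ (x : V) (σ : V → ℤˣ), r = |cavity J h σ x|} Kbar)
    (δ : ℝ) (hδ : δ = Real.exp (-(2 * q)))
    (φ : (V → ℤˣ) → V → ℝ)
    (hφ : ∀ σ x, φ σ x = Real.exp (-β * cavity J h σ x * sp σ x)) :
    ∀ σ τ : V → ℤˣ,
      ∑ x, Real.log (1 + δ * (φ σ x - φ τ x) / (1 + δ * φ τ x)) ≤
        2 * (Fintype.card V : ℝ) * β * δ * Kbar * Real.exp (β * Kbar) := by
  intro σ τ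
  obtain ⟨x0, σ0, hx0⟩ := hK.1
  have hK0 : 0 ≤ Kbar := hx0 ▸ abs_nonneg _
  have hδpos : 0 < δ := hδ ▸ Real.exp_pos _
  have hφpos : ∀ ρ x, 0 < φ ρ x := fun ρ x => (hφ ρ x) ▸ Real.exp_pos _
  have hφle : ∀ ρ x, φ ρ x ≤ Real.exp (β * Kbar) := by
    intro ρ x
    rw [hφ ρ x]
    apply Real.exp_le_exp.2
    have hc : |cavity J h ρ x| ≤ Kbar := hK.2 ⟨x, ρ, rfl⟩
    have habs := abs_le.1 hc
    have hs : sp ρ x = 1 ∨ sp ρ x = -1 := by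
      rcases Int.units_eq_one_or (ρ x) with h1 | h1 <;> simp [sp, h1]
    rcases hs with h1 | h1 <;> rw [h1] <;> nlinarith
  have hexpbnd : Real.exp (β * Kbar) - Real.exp (-(β * Kbar)) ≤
      2 * β * Kbar * Real.exp (β * Kbar) := by
    have h1 := Real.add_one_le_exp (-(2 * (β * Kbar)))
    have h2 : Real.exp (β * Kbar) * Real.exp (-(2 * (β * Kbar))) =
        Real.exp (-(β * Kbar)) := by
      rw [← Real.exp_add]; ring_nf
    nlinarith [Real.exp_pos (β * Kbar), mul_nonneg hβ hK0]
  have hφge : ∀ ρ x, Real.exp (-(β * Kbar)) ≤ φ ρ x := by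
    intro ρ x
    rw [hφ ρ x]
    apply Real.exp_le_exp.2
    have hc : |cavity J h ρ x| ≤ Kbar := hK.2 ⟨x, ρ, rfl⟩
    have habs := abs_le.1 hc
    have hs : sp ρ x = 1 ∨ sp ρ x = -1 := by
      rcases Int.units_eq_one_or (ρ x) with h1 | h1 <;> simp [sp, h1]
    rcases hs with h1 | h1 <;> rw [h1] <;> nlinarith
  have key : ∀ x, Real.log (1 + δ * (φ σ x - φ τ x) / (1 + δ * φ τ x)) ≤
      2 * β * δ * Kbar * Real.exp (β * Kbar) := by
    intro x
    have hden : 0 < 1 + δ * φ τ x := by nlinarith [hφpos τ x]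
    have hrw : 1 + δ * (φ σ x - φ τ x) / (1 + δ * φ τ x) =
        (1 + δ * φ σ x) / (1 + δ * φ τ x) := by
      field_simp; ring
    have hpos : 0 < 1 + δ * (φ σ x - φ τ x) / (1 + δ * φ τ x) := by
      rw [hrw]
      exact div_pos (by nlinarith [hφpos σ x]) hden
    have hlog := Real.log_le_sub_one_of_pos hpos
    have hrhs0 : 0 ≤ 2 * β * δ * Kbar * Real.exp (β * Kbar) := by positivity
    rcases le_or_gt (φ σ x) (φ τ x) with hle | hlt
    · have ht : δ * (φ σ x - φ τ x) / (1 + δ * φ τ x) ≤ 0 := by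
        apply div_nonpos_of_nonpos_of_nonneg
        · nlinarith
        · linarith
      linarith
    · have hdiff : φ σ x - φ τ x ≤ 2 * β * Kbar * Real.exp (β * Kbar) := by
        have := hφle σ x
        have := hφge τ x
        linarith
      have ht : δ * (φ σ x - φ τ x) / (1 + δ * φ τ x) ≤ δ * (φ σ x - φ τ x) := by
        rw [div_le_iff₀ hden]
        nlinarith [mul_pos (mul_pos hδpos (sub_pos.2 hlt)) (mul_pos hδpos (hφpos τ x))]
      have : δ * (φ σ x - φ τ x) ≤ 2 * β * δ * Kbar * Real.exp (β * Kbar) := by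
        nlinarith
      linarith
  calc ∑ x, Real.log (1 + δ * (φ σ x - φ τ x) / (1 + δ * φ τ x))
      ≤ ∑ _x : V, 2 * β * δ * Kbar * Real.exp (β * Kbar) :=
        Finset.sum_le_sum fun x _ => key x
    _ = 2 * (Fintype.card V : ℝ) * β * δ * Kbar * Real.exp (β * Kbar) := by
        rw [Finset.sum_const, Finset.card_univ, nsmul_eq_mul]; ring
end

section
/- (Sufficiency step in the proof of Proposition 4.1) Let ε > 0, δ = e^{−2q}, φ_x(σ) = e^{−β·h̃_x(σ)·σ_x}, and R_H = max_{σ,τ∈{±1}^V} |H(σ) − H(τ)|. Suppose σ, τ ∈ {±1}^V satisfy π^SCA_{β,q}(σ) ≥ π^SCA_{β,q}(τ) and that β·ε·R_H ≥ Σ_{x∈V} log((1 + δ·φ_x(σ))/(1 + δ·φ_x(τ))). Then w^G_β(σ) ≥ w^G_β(τ)·e^{−β·ε·R_H}, i.e. the latter inequality of order-preservation π^G_β(σ) ≥ π^G_β(τ)·e^{−β·ε·R_H} holds. -/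
open Finset Real

variable {V : Type*}

variable [Fintype V] [DecidableEq V]

/-! Summing out `τ` in the SCA weight factorizes it over the sites:
`w^SCA(σ) = e^{q|V|} · w^G(σ) · ∏_x (1 + δ φ_x(σ))`. So `π^SCA(σ) ≥ π^SCA(τ)` compares
`w^G · ∏_x (1 + δ φ_x)` at `σ` and at `τ`, and the hypothesis on the logarithms bounds the ratio
of the two products by `e^{β ε R_H}`. -/

lemma Int.sum_units {M : Type*} [AddCommMonoid M] (f : ℤˣ → M) :
    ∑ s : ℤˣ, f s = f 1 + f (-1) := by
  rw [show (univ : Finset ℤˣ) = {1, -1} by decide, sum_pair (by decide)]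

lemma Int.sum_units_exp_mul (a : ℝ) (s₀ : ℤˣ) :
    ∑ s : ℤˣ, exp (a * (s : ℤ)) =
      exp (a * (s₀ : ℤ)) * (1 + exp (-(2 * (a * (s₀ : ℤ))))) := by
  rw [Int.sum_units, mul_add, mul_one, ← exp_add]
  rcases Int.units_eq_one_or s₀ with rfl | rfl <;> push_cast <;> ring_nf

lemma Int.units_cast_mul_self (u : ℤˣ) : ((u : ℤ) : ℝ) * (u : ℤ) = 1 := by
  rcases Int.units_eq_one_or u with rfl | rfl <;> norm_num

omit [DecidableEq V] in
lemma Ham_eq_sum_cavity (J : V → V → ℝ) (h : V → ℝ) (σ : V → ℤˣ) :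
    Ham J h σ = -(1 / 2) * ∑ x, (cavity J h σ x + h x) * sp σ x := by
  have hsum : ∑ x, (cavity J h σ x + h x) * sp σ x
      = ∑ x, ∑ y, J x y * sp σ x * sp σ y + 2 * ∑ x, h x * sp σ x := by
    simp only [cavity, add_mul, sum_add_distrib, sum_mul, mul_right_comm _ (sp σ _) (sp σ _)]
    ring
  rw [Ham, hsum]
  ring

omit [DecidableEq V] in
lemma sca_exponent_eq (J : V → V → ℝ) (h : V → ℝ) (hJ : ∀ x y, J x y = J y x) (β q : ℝ)
    (σ τ : V → ℤˣ) :
    -β * Ham2 J h σ τ + q * ∑ x, sp σ x * sp τ x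
      = β / 2 * ∑ x, h x * sp σ x + ∑ x, (β * cavity J h σ x / 2 + q * sp σ x) * sp τ x := by
  have hsum : ∑ x, (β * cavity J h σ x / 2 + q * sp σ x) * sp τ x
      = β / 2 * (∑ x, ∑ y, J x y * sp σ x * sp τ y + ∑ x, h x * sp τ x)
        + q * ∑ x, sp σ x * sp τ x := by
    rw [sum_comm, ← sum_add_distrib, mul_sum, mul_sum, ← sum_add_distrib]
    refine sum_congr rfl fun x _ => ?_
    have hJx : ∑ y, J y x * sp σ y * sp τ x = (∑ y, J x y * sp σ y) * sp τ x := by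
      rw [sum_mul]
      exact sum_congr rfl fun y _ => by rw [hJ]
    rw [hJx, cavity]
    ring
  rw [Ham2, hsum]
  simp only [mul_add, sum_add_distrib]
  ring

lemma wSCA_eq_mul_prod (J : V → V → ℝ) (h : V → ℝ) (hJ : ∀ x y, J x y = J y x) (β q : ℝ)
    (σ : V → ℤˣ) :
    wSCA J h β q σ = exp (q * Fintype.card V) * wG J h β σ *
      ∏ x, (1 + exp (-(2 * q)) * exp (-β * cavity J h σ x * sp σ x)) := by
  set a : V → ℝ := fun x => β * cavity J h σ x / 2 + q * sp σ x
  have hsite : ∀ x, a x * (σ x : ℤ) = β / 2 * (cavity J h σ x * sp σ x) + q := by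
    intro x
    simp only [a, sp, add_mul, mul_assoc, Int.units_cast_mul_self]
    ring
  have hsum : wSCA J h β q σ = exp (β / 2 * ∑ x, h x * sp σ x) *
      ∏ x, ∑ s : ℤˣ, exp (a x * (s : ℤ)) := by
    rw [Fintype.prod_sum, mul_sum]
    refine sum_congr rfl fun τ _ => ?_
    rw [sca_exponent_eq J h hJ, exp_add, exp_sum]
    rfl
  have hexp : β / 2 * ∑ x, h x * sp σ x + ∑ x, a x * (σ x : ℤ)
      = -β * Ham J h σ + q * Fintype.card V := by
    simp only [hsite, Ham_eq_sum_cavity J h σ, sum_add_distrib, ← mul_sum, add_mul, sum_const,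
      card_univ, nsmul_eq_mul]
    ring
  simp only [hsum, fun x => Int.sum_units_exp_mul (a x) (σ x), prod_mul_distrib,
    ← exp_sum]
  rw [← mul_assoc, ← exp_add, hexp, exp_add, wG, mul_comm (exp _)]
  congr 1
  refine prod_congr rfl fun x _ => ?_
  rw [hsite, ← exp_add]
  ring_nf

lemma prod_le_exp_mul_prod_of_sum_log_div_le {ι : Type*} [Fintype ι] {a b : ι → ℝ}
    (ha : ∀ i, 0 < a i) (hb : ∀ i, 0 < b i) {X : ℝ} (hX : ∑ i, log (a i / b i) ≤ X) :
    ∏ i, a i ≤ exp X * ∏ i, b i := calc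
  ∏ i, a i = exp (∑ i, log (a i / b i)) * ∏ i, b i := by
    rw [exp_sum, ← prod_mul_distrib]
    exact prod_congr rfl fun i _ => by
      rw [exp_log (div_pos (ha i) (hb i)), div_mul_cancel₀ _ (hb i).ne']
  _ ≤ exp X * ∏ i, b i := by gcongr; exact (prod_pos fun i _ => hb i).le

lemma mul_exp_neg_le_of_mul_prod_le {ι : Type*} [Fintype ι] {a b : ι → ℝ}
    (ha : ∀ i, 0 < a i) (hb : ∀ i, 0 < b i) {u v X : ℝ} (hv : 0 ≤ v)
    (huv : u * ∏ i, b i ≤ v * ∏ i, a i) (hX : ∑ i, log (a i / b i) ≤ X) :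
    u * exp (-X) ≤ v := by
  rw [exp_neg, ← div_eq_mul_inv, div_le_iff₀ (exp_pos _)]
  refine le_of_mul_le_mul_right ?_ (prod_pos fun i (_ : i ∈ univ) => hb i)
  calc u * ∏ i, b i ≤ v * ∏ i, a i := huv
    _ ≤ v * (exp X * ∏ i, b i) := by
      gcongr; exact prod_le_exp_mul_prod_of_sum_log_div_le ha hb hX
    _ = v * exp X * ∏ i, b i := by ring

theorem order_preservation_sufficiency_step_general
    (J : V → V → ℝ) (h : V → ℝ) (β q ε : ℝ)
    (hJ : ∀ x y, J x y = J y x)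
    (RH : ℝ)
    (δ : ℝ) (hδ : δ = Real.exp (-(2 * q)))
    (φ : (V → ℤˣ) → V → ℝ)
    (hφ : ∀ σ x, φ σ x = Real.exp (-β * cavity J h σ x * sp σ x)) :
    ∀ σ τ : V → ℤˣ,
      piSCA J h β q σ ≥ piSCA J h β q τ →
      β * ε * RH ≥ ∑ x, Real.log ((1 + δ * φ σ x) / (1 + δ * φ τ x)) →
      wG J h β σ ≥ wG J h β τ * Real.exp (-(β * ε * RH)) ∧
      piG J h β σ ≥ piG J h β τ * Real.exp (-(β * ε * RH)) := by
  intro σ τ hpi hlog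
  obtain rfl : φ = fun σ x => exp (-β * cavity J h σ x * sp σ x) := funext₂ hφ
  subst hδ
  have hZ : 0 < ∑ ρ, wSCA J h β q ρ :=
    sum_pos (fun _ _ => sum_pos (fun _ _ => exp_pos _) univ_nonempty) univ_nonempty
  have hw := (div_le_div_iff_of_pos_right hZ).1 hpi
  rw [wSCA_eq_mul_prod J h hJ, wSCA_eq_mul_prod J h hJ, mul_assoc, mul_assoc] at hw
  have hwG : wG J h β τ * exp (-(β * ε * RH)) ≤ wG J h β σ :=
    mul_exp_neg_le_of_mul_prod_le (fun _ => by positivity) (fun _ => by positivity)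
      (exp_pos _).le (le_of_mul_le_mul_left hw (exp_pos _)) hlog
  have hZG : 0 < ∑ ρ, wG J h β ρ := sum_pos (fun _ _ => exp_pos _) univ_nonempty
  refine ⟨hwG, ?_⟩
  rw [ge_iff_le, piG, piG, div_mul_eq_mul_div]
  exact (div_le_div_iff_of_pos_right hZG).2 hwG

/-- sufficiency step in the proof of Proposition 4.1: if
`π^SCA_{β,q}(σ) ≥ π^SCA_{β,q}(τ)` and `β ε R_H ≥ Σ_x log((1 + δ φ_x(σ))/(1 + δ φ_x(τ)))`,
where `δ = e^{-2q}` and `φ_x(σ) = e^{-β h̃_x(σ) σ_x}`, then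
`w^G_β(σ) ≥ w^G_β(τ) e^{-β ε R_H}`, i.e. `π^G_β(σ) ≥ π^G_β(τ) e^{-β ε R_H}`. -/
theorem order_preservation_sufficiency_step
    (J : V → V → ℝ) (h : V → ℝ) (β q ε : ℝ) (hβ : 0 ≤ β) (hq : 0 ≤ q) (hε : 0 < ε)
    (hJ : ∀ x y, J x y = J y x) (hJ0 : ∀ x, J x x = 0)
    (RH : ℝ)
    (hR : IsGreatest {r : ℝ | ∃ σ τ : V → ℤˣ, r = |Ham J h σ - Ham J h τ|} RH)
    (δ : ℝ) (hδ : δ = Real.exp (-(2 * q)))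
    (φ : (V → ℤˣ) → V → ℝ)
    (hφ : ∀ σ x, φ σ x = Real.exp (-β * cavity J h σ x * sp σ x)) :
    ∀ σ τ : V → ℤˣ,
      piSCA J h β q σ ≥ piSCA J h β q τ →
      β * ε * RH ≥ ∑ x, Real.log ((1 + δ * φ σ x) / (1 + δ * φ τ x)) →
      wG J h β σ ≥ wG J h β τ * Real.exp (-(β * ε * RH)) ∧
      piG J h β σ ≥ piG J h β τ * Real.exp (-(β * ε * RH)) :=
  order_preservation_sufficiency_step_general J h β q ε hJ RH δ hδ φ hφ
end
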